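/- arXiv:2410.14564 — 4 statements merged into one kernel-verified Lean document; each statement's English description precedes it below -/
import Mathlib

section
/- The operator ⟨∇* f⟩_i := (1/|ω_i|) Σ_j (|Γ_ij|/r_ij) [ (f_i - f_j)(m_ij - (x_i+x_j)/2) - ((f_i+f_j)/2) (x_i - x_j) ] is the negative adjoint of the discrete gradient ⟨∇f⟩_i = -(1/|ω_i|) Σ_j (|Γ_ij|/r_ij)(f_i - f_j)(m_ij - x_i) with respect to the inner product (f,g) = Σ_i |ω_i| f_i g_i; that is, Σ_i |ω_i| ⟨∇f⟩_i g_i = -Σ_i |ω_i| f_i ⟨∇*g⟩_i for all scalar fields f, g. -/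
/-!
Both sides are double sums over ordered pairs of neighbouring cells. Since `|Γ_ij| / r_ij` and
`m_ij` are symmetric in `i, j`, two such double sums agree as soon as their summands agree after
symmetrisation `(i, j) ↦ (i, j) + (j, i)`; for the two sides at hand this is an identity between the
contributions of a single edge, checked by linear algebra.
-/

open Finset

theorem Finset.sum_sum_add_swap {ι M : Type*} [Fintype ι] [AddCommMonoid M] (F : ι → ι → M) :
    ∑ i, ∑ j, (F i j + F j i) = 2 • ∑ i, ∑ j, F i j := by
  simp only [sum_add_distrib, two_nsmul]
  rw [sum_comm (f := fun i j => F j i)]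

theorem Finset.sum_sum_eq_of_add_swap_eq {ι V : Type*} [Fintype ι] [AddCommGroup V] [Module ℝ V]
    {F G : ι → ι → V} (h : ∀ i j, F i j + F j i = G i j + G j i) :
    ∑ i, ∑ j, F i j = ∑ i, ∑ j, G i j := by
  have hsymm : (2 : ℝ) • ∑ i, ∑ j, F i j = (2 : ℝ) • ∑ i, ∑ j, G i j := by
    simp only [ofNat_smul_eq_nsmul, ← sum_sum_add_swap, h]
  exact smul_right_injective V two_ne_zero hsymm

theorem Finset.smul_sum_smul_of_mul_eq {ι R V : Type*} [Fintype ι] [Semiring R] [AddCommMonoid V]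
    [Module R V] {a : R} {u w : ι → R} (v : ι → V) (h : ∀ j, a * u j = w j) :
    a • ∑ j, u j • v j = ∑ j, w j • v j := by
  simp only [smul_sum, smul_smul, h]

theorem edge_gradient_add_swap_eq {V : Type*} [AddCommGroup V] [Module ℝ V]
    (c fi fj gi gj : ℝ) (xi xj m : V) :
    (-gi * (c * (fi - fj))) • (m - xi) + (-gj * (c * (fj - fi))) • (m - xj) =
      -((fi * c) • ((gi - gj) • (m - (2:ℝ)⁻¹ • (xi + xj)) - ((gi + gj) / 2) • (xi - xj)))
      + -((fj * c) • ((gj - gi) • (m - (2:ℝ)⁻¹ • (xj + xi)) - ((gj + gi) / 2) • (xj - xi))) := by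
  module

theorem discrete_gradient_negative_adjoint_general {N : ℕ}
    (x : Fin N → EuclideanSpace ℝ (Fin 2))
    (A : Fin N → ℝ) (hA : ∀ i, 0 < A i)
    (Γ : Fin N → Fin N → ℝ)
    (hΓsymm : ∀ i j, Γ i j = Γ j i)
    (m : Fin N → Fin N → EuclideanSpace ℝ (Fin 2))
    (hmsymm : ∀ i j, m i j = m j i)
    (grad adj : (Fin N → ℝ) → Fin N → EuclideanSpace ℝ (Fin 2))
    (hgrad : ∀ f i, grad f i =
      -((A i)⁻¹) • ∑ j, ((Γ i j / dist (x i) (x j)) * (f i - f j)) • (m i j - x i))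
    (hadj : ∀ g i, adj g i =
      (A i)⁻¹ • ∑ j, (Γ i j / dist (x i) (x j)) •
        ((g i - g j) • (m i j - (2:ℝ)⁻¹ • (x i + x j))
          - ((g i + g j) / 2) • (x i - x j)))
    (f g : Fin N → ℝ) :
    (∑ i, (A i * g i) • grad f i) = -(∑ i, (A i * f i) • adj g i) := by
  set c : Fin N → Fin N → ℝ := fun i j => Γ i j / dist (x i) (x j)
  have hc : ∀ i j, c j i = c i j := fun i j => by simp only [c, hΓsymm, dist_comm]
  have hA0 : ∀ i, A i ≠ 0 := fun i => (hA i).ne'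
  have hgrad' : ∀ i, (A i * g i) • grad f i =
      ∑ j, (-g i * (c i j * (f i - f j))) • (m i j - x i) := fun i => by
    rw [hgrad, smul_smul]
    exact smul_sum_smul_of_mul_eq _ fun j => by simp only [c]; field_simp [hA0 i]
  have hadj' : ∀ i, (A i * f i) • adj g i =
      ∑ j, (f i * c i j) • ((g i - g j) • (m i j - (2:ℝ)⁻¹ • (x i + x j))
        - ((g i + g j) / 2) • (x i - x j)) := fun i => by
    rw [hadj, smul_smul]
    exact smul_sum_smul_of_mul_eq _ fun j => by simp only [c]; field_simp [hA0 i]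
  simp only [hgrad', hadj', ← sum_neg_distrib]
  refine sum_sum_eq_of_add_swap_eq fun i j => ?_
  rw [hc, hmsymm j i]
  exact edge_gradient_add_swap_eq ..

/-- The operator `⟨∇* f⟩` is the negative adjoint of the discrete gradient `⟨∇f⟩`
with respect to the inner product `(f,g) = ∑_i |ω_i| f_i g_i`:
`∑_i |ω_i| ⟨∇f⟩_i g_i = -∑_i |ω_i| f_i ⟨∇*g⟩_i` for all scalar fields `f, g`. -/
theorem discrete_gradient_negative_adjoint {N : ℕ}
    (x : Fin N → EuclideanSpace ℝ (Fin 2))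
    (A : Fin N → ℝ) (hA : ∀ i, 0 < A i)
    (Γ : Fin N → Fin N → ℝ) (hΓnn : ∀ i j, 0 ≤ Γ i j)
    (hΓsymm : ∀ i j, Γ i j = Γ j i) (hΓdiag : ∀ i, Γ i i = 0)
    (m : Fin N → Fin N → EuclideanSpace ℝ (Fin 2))
    (hmsymm : ∀ i j, m i j = m j i)
    (grad adj : (Fin N → ℝ) → Fin N → EuclideanSpace ℝ (Fin 2))
    (hgrad : ∀ f i, grad f i =
      -((A i)⁻¹) • ∑ j, ((Γ i j / dist (x i) (x j)) * (f i - f j)) • (m i j - x i))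
    (hadj : ∀ g i, adj g i =
      (A i)⁻¹ • ∑ j, (Γ i j / dist (x i) (x j)) •
        ((g i - g j) • (m i j - (2:ℝ)⁻¹ • (x i + x j))
          - ((g i + g j) / 2) • (x i - x j)))
    (f g : Fin N → ℝ) :
    (∑ i, (A i * g i) • grad f i) = -(∑ i, (A i * f i) • adj g i) :=
  discrete_gradient_negative_adjoint_general x A hA Γ hΓsymm m hmsymm grad adj hgrad hadj f g
end

section
/- Discrete total energy conservation: under the semi-discrete scheme with ρ_i de_i/dt = f_i · v_i + L_i : T_i, f_i = ⟨div T⟩_i, L_i = ⟨∇* v⟩_i, constant masses M_i = |ω_i| ρ_i, and d|ω_i|/dt = |ω_i| Tr L_i, the total energy Σ_i |ω_i| ρ_i e_i is constant in time, as a consequence of the adjointness identity Σ_i |ω_i| ⟨div T⟩_i · v_i = -Σ_i |ω_i| T_i : ⟨∇* v⟩_i. -/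
open scoped RealInnerProductSpace

/-- Frobenius inner product of two `2×2` real matrices. -/
def frob (Amat Bmat : Matrix (Fin 2) (Fin 2) ℝ) : ℝ :=
  ∑ k, ∑ l, Amat k l * Bmat k l

/-!
With constant masses `M_i = |ω_i| ρ_i` the total energy is `∑_i M_i e_i`, whose time derivative
is `∑_i M_i (f_i·v_i + L_i : T_i) / ρ_i = ∑_i |ω_i| f_i·v_i + ∑_i |ω_i| T_i : L_i`. The
adjointness identity says exactly that these two sums cancel, so the total energy has zero
derivative everywhere and is therefore constant.
-/

theorem frob_comm (P Q : Matrix (Fin 2) (Fin 2) ℝ) : frob P Q = frob Q P := by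
  simp only [frob, mul_comm]

theorem eq_of_hasDerivAt_zero {g : ℝ → ℝ} (hg : ∀ t, HasDerivAt g 0 t) (t s : ℝ) :
    g t = g s :=
  is_const_of_deriv_eq_zero (fun x => (hg x).differentiableAt) (fun x => (hg x).deriv) t s

theorem hasDerivAt_sum_mul_mul_of_mul_eq_const {ι : Type*} [Fintype ι]
    (A ρ e : ι → ℝ → ℝ) (M p : ι → ℝ) (t : ℝ) (hρ : ∀ i, ρ i t ≠ 0)
    (hM : ∀ i s, A i s * ρ i s = M i) (he : ∀ i, HasDerivAt (e i) (p i / ρ i t) t) :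
    HasDerivAt (fun s => ∑ i, A i s * ρ i s * e i s) (∑ i, A i t * p i) t := by
  have hmass : (fun s => ∑ i, A i s * ρ i s * e i s) = fun s => ∑ i, M i * e i s := by
    simp only [hM]
  have hrate : ∀ i, M i * (p i / ρ i t) = A i t * p i := by
    intro i
    rw [← hM i t]
    field_simp [hρ i]
  rw [hmass, ← Finset.sum_congr rfl fun i _ => hrate i]
  exact HasDerivAt.fun_sum fun i _ => (he i).const_mul (M i)

theorem discrete_energy_conservation_general {N : ℕ}
    (A ρ e : Fin N → ℝ → ℝ)
    (v f : Fin N → ℝ → EuclideanSpace ℝ (Fin 2))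
    (T L : Fin N → ℝ → Matrix (Fin 2) (Fin 2) ℝ)
    (M : Fin N → ℝ)
    (hρpos : ∀ i t, 0 < ρ i t)
    -- constant masses
    (hM : ∀ i t, A i t * ρ i t = M i)
    -- energy equation ρ_i de_i/dt = f_i·v_i + L_i : T_i
    (he : ∀ i t, HasDerivAt (e i)
      ((⟪f i t, v i t⟫ + frob (L i t) (T i t)) / ρ i t) t)
    -- adjointness (discrete integration by parts):
    (hibp : ∀ t, (∑ i, A i t * ⟪f i t, v i t⟫)
              = -(∑ i, A i t * frob (T i t) (L i t))) :
    ∀ t, (∑ i, A i t * ρ i t * e i t) = ∑ i, A i 0 * ρ i 0 * e i 0 := by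
  have hpower : ∀ t, ∑ i, A i t * (⟪f i t, v i t⟫ + frob (L i t) (T i t)) = 0 := by
    intro t
    simp only [mul_add, Finset.sum_add_distrib, frob_comm (L _ t), hibp t, neg_add_cancel]
  refine fun t =>
    eq_of_hasDerivAt_zero (g := fun s => ∑ i, A i s * ρ i s * e i s) (fun s => ?_) t 0
  simpa only [hpower] using hasDerivAt_sum_mul_mul_of_mul_eq_const A ρ e M
    (fun i => ⟪f i s, v i s⟫ + frob (L i s) (T i s)) s (fun i => (hρpos i s).ne') hM
    (fun i => he i s)

/-- Discrete total energy conservation: under the semi-discrete scheme with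
`ρ_i de_i/dt = f_i·v_i + L_i : T_i`, constant masses `M_i = |ω_i| ρ_i`,
`d|ω_i|/dt = |ω_i| Tr L_i`, and the adjointness identity
`∑_i |ω_i| f_i·v_i = -∑_i |ω_i| T_i : L_i`, the total energy
`∑_i |ω_i| ρ_i e_i` is constant in time. -/
theorem discrete_energy_conservation {N : ℕ}
    (A ρ e : Fin N → ℝ → ℝ)
    (v f : Fin N → ℝ → EuclideanSpace ℝ (Fin 2))
    (T L : Fin N → ℝ → Matrix (Fin 2) (Fin 2) ℝ)
    (M : Fin N → ℝ)
    (hApos : ∀ i t, 0 < A i t) (hρpos : ∀ i t, 0 < ρ i t)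
    -- constant masses
    (hM : ∀ i t, A i t * ρ i t = M i)
    -- area evolution d|ω_i|/dt = |ω_i| Tr L_i
    (hA : ∀ i t, HasDerivAt (A i) (A i t * (Matrix.trace (L i t))) t)
    -- energy equation ρ_i de_i/dt = f_i·v_i + L_i : T_i
    (he : ∀ i t, HasDerivAt (e i)
      ((⟪f i t, v i t⟫ + frob (L i t) (T i t)) / ρ i t) t)
    -- adjointness (discrete integration by parts):
    (hibp : ∀ t, (∑ i, A i t * ⟪f i t, v i t⟫)
              = -(∑ i, A i t * frob (T i t) (L i t))) :
    ∀ t, (∑ i, A i t * ρ i t * e i t) = ∑ i, A i 0 * ρ i 0 * e i 0 :=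
  discrete_energy_conservation_general A ρ e v f T L M hρpos hM he hibp
end

section
/- Discrete linear momentum conservation: for any constant vector c, ⟨∇* c⟩_i = 0 for each interior cell (since Σ_j (|Γ_ij|/r_ij) x_ij = 0), and hence under the semi-discrete momentum equation ρ_i dv_i/dt = ⟨div T⟩_i with constant masses M_i, the total momentum Σ_i M_i v_i is constant in time. -/
open scoped RealInnerProductSpace

/-- Outer product of two vectors in `ℝ²`. -/
def outer (a b : EuclideanSpace ℝ (Fin 2)) : Matrix (Fin 2) (Fin 2) ℝ :=
  fun k l => a k * b l

/-- The negative-adjoint gradient of the constant field `c` at cell `i`. -/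
noncomputable def adjGradConst {N : ℕ} (x : Fin N → EuclideanSpace ℝ (Fin 2))
    (A : Fin N → ℝ) (Γ : Fin N → Fin N → ℝ)
    (m : Fin N → Fin N → EuclideanSpace ℝ (Fin 2)) (i : Fin N)
    (c : EuclideanSpace ℝ (Fin 2)) : Matrix (Fin 2) (Fin 2) ℝ :=
  (A i)⁻¹ • ∑ j, (Γ i j / dist (x i) (x j)) •
    (outer (c - c) (m i j - (2:ℝ)⁻¹ • (x i + x j)) - outer c (x i - x j))

theorem outer_zero_left (b : EuclideanSpace ℝ (Fin 2)) : outer 0 b = 0 := by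
  ext k l
  simp [outer]

theorem outer_zero_right (a : EuclideanSpace ℝ (Fin 2)) : outer a 0 = 0 := by
  ext k l
  simp [outer]

theorem outer_smul_right (a b : EuclideanSpace ℝ (Fin 2)) (r : ℝ) :
    outer a (r • b) = r • outer a b := by
  ext k l
  simp only [outer, PiLp.smul_apply, smul_eq_mul, Matrix.smul_apply]
  ring

theorem outer_sum_right {ι : Type*} (s : Finset ι) (a : EuclideanSpace ℝ (Fin 2))
    (b : ι → EuclideanSpace ℝ (Fin 2)) :
    outer a (∑ j ∈ s, b j) = ∑ j ∈ s, outer a (b j) := by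
  ext k l
  simp [outer, Matrix.sum_apply, Finset.mul_sum]

theorem frob_zero_right (P : Matrix (Fin 2) (Fin 2) ℝ) : frob P 0 = 0 := by
  simp [frob]

theorem adjGradConst_eq_zero {N : ℕ} (x : Fin N → EuclideanSpace ℝ (Fin 2))
    (A : Fin N → ℝ) (Γ : Fin N → Fin N → ℝ)
    (m : Fin N → Fin N → EuclideanSpace ℝ (Fin 2)) (i : Fin N)
    (hx : ∑ j, (Γ i j / dist (x i) (x j)) • (x i - x j) = 0)
    (c : EuclideanSpace ℝ (Fin 2)) : adjGradConst x A Γ m i c = 0 := by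
  have hsum : ∑ j, (Γ i j / dist (x i) (x j)) • outer c (x i - x j) = 0 := by
    simp_rw [← outer_smul_right, ← outer_sum_right, hx, outer_zero_right]
  simp only [adjGradConst, sub_self, outer_zero_left, zero_sub, smul_neg,
    Finset.sum_neg_distrib, hsum, neg_zero, smul_zero]

theorem sum_smul_eq_zero_of_forall_sum_mul_inner_eq_zero {ι E : Type*} [Fintype ι]
    [NormedAddCommGroup E] [InnerProductSpace ℝ E] (a : ι → ℝ) (f : ι → E)
    (h : ∀ c, ∑ i, a i * ⟪f i, c⟫ = 0) : ∑ i, a i • f i = 0 := by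
  refine ext_inner_right ℝ fun c => ?_
  simp [sum_inner, real_inner_smul_left, h c]

theorem sum_smul_eq_of_hasDerivAt {ι E : Type*} [Fintype ι] [NormedAddCommGroup E]
    [NormedSpace ℝ E] {v f : ι → ℝ → E} {A ρ M : ι → ℝ} (hρ : ∀ i, ρ i ≠ 0)
    (hM : ∀ i, A i * ρ i = M i) (hv : ∀ i t, HasDerivAt (v i) ((ρ i)⁻¹ • f i t) t)
    (hf : ∀ t, ∑ i, A i • f i t = 0) (t : ℝ) :
    ∑ i, M i • v i t = ∑ i, M i • v i 0 := by
  have hmass : ∀ i, M i * (ρ i)⁻¹ = A i := fun i => by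
    rw [← hM i, mul_inv_cancel_right₀ (hρ i)]
  have hder : ∀ t, HasDerivAt (fun t => ∑ i, M i • v i t) 0 t := fun t => by
    have h := HasDerivAt.fun_sum fun i (_ : i ∈ Finset.univ) => (hv i t).const_smul (M i)
    simpa only [Pi.smul_apply, smul_smul, hmass, hf t] using h
  exact is_const_of_deriv_eq_zero (fun u => (hder u).differentiableAt)
    (fun u => (hder u).deriv) t 0

theorem discrete_momentum_conservation_general {N : ℕ}
    (x : Fin N → EuclideanSpace ℝ (Fin 2))
    (A ρ M : Fin N → ℝ) (hρpos : ∀ i, 0 < ρ i)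
    (hM : ∀ i, A i * ρ i = M i)
    (Γ : Fin N → Fin N → ℝ)
    (m : Fin N → Fin N → EuclideanSpace ℝ (Fin 2))
    -- interior-cell identity ∑_j (|Γ_ij|/r_ij) x_ij = 0
    (hx : ∀ i, (∑ j, (Γ i j / dist (x i) (x j)) • (x i - x j))
            = (0 : EuclideanSpace ℝ (Fin 2)))
    (v f : Fin N → ℝ → EuclideanSpace ℝ (Fin 2))
    (T : Fin N → ℝ → Matrix (Fin 2) (Fin 2) ℝ)
    -- momentum equation ρ_i dv_i/dt = ⟨div T⟩_i =: f_i
    (hv : ∀ i t, HasDerivAt (v i) ((ρ i)⁻¹ • f i t) t)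
    -- discrete integration by parts against constant fields
    (hibp : ∀ t (c : EuclideanSpace ℝ (Fin 2)),
      (∑ i, A i * ⟪f i t, c⟫)
        = -(∑ i, A i * frob (T i t) (adjGradConst x A Γ m i c))) :
    (∀ i c, adjGradConst x A Γ m i c = 0) ∧
    (∀ t, (∑ i, M i • v i t) = ∑ i, M i • v i 0) := by
  have hgrad : ∀ i c, adjGradConst x A Γ m i c = 0 := fun i =>
    adjGradConst_eq_zero x A Γ m i (hx i)
  have hforce : ∀ t, ∑ i, A i • f i t = 0 := fun t =>
    sum_smul_eq_zero_of_forall_sum_mul_inner_eq_zero A (f · t) fun c => by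
      simp only [hibp t c, hgrad, frob_zero_right, mul_zero, Finset.sum_const_zero, neg_zero]
  exact ⟨hgrad, sum_smul_eq_of_hasDerivAt (fun i => (hρpos i).ne') hM hv hforce⟩

/-- Discrete linear momentum conservation: for any constant vector `c`,
`⟨∇* c⟩_i = 0` for each interior cell, and hence under
`ρ_i dv_i/dt = ⟨div T⟩_i` with constant masses, the total momentum
`∑_i M_i v_i` is constant in time. -/
theorem discrete_momentum_conservation {N : ℕ}
    (x : Fin N → EuclideanSpace ℝ (Fin 2))
    (A ρ M : Fin N → ℝ) (hApos : ∀ i, 0 < A i) (hρpos : ∀ i, 0 < ρ i)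
    (hM : ∀ i, A i * ρ i = M i)
    (Γ : Fin N → Fin N → ℝ) (hΓnn : ∀ i j, 0 ≤ Γ i j) (hΓdiag : ∀ i, Γ i i = 0)
    (m : Fin N → Fin N → EuclideanSpace ℝ (Fin 2))
    -- interior-cell identity ∑_j (|Γ_ij|/r_ij) x_ij = 0
    (hx : ∀ i, (∑ j, (Γ i j / dist (x i) (x j)) • (x i - x j))
            = (0 : EuclideanSpace ℝ (Fin 2)))
    (v f : Fin N → ℝ → EuclideanSpace ℝ (Fin 2))
    (T : Fin N → ℝ → Matrix (Fin 2) (Fin 2) ℝ)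
    (hTsymm : ∀ i t, (T i t).transpose = T i t)
    -- momentum equation ρ_i dv_i/dt = ⟨div T⟩_i =: f_i
    (hv : ∀ i t, HasDerivAt (v i) ((ρ i)⁻¹ • f i t) t)
    -- discrete integration by parts against constant fields
    (hibp : ∀ t (c : EuclideanSpace ℝ (Fin 2)),
      (∑ i, A i * ⟪f i t, c⟫)
        = -(∑ i, A i * frob (T i t) (adjGradConst x A Γ m i c))) :
    (∀ i c, adjGradConst x A Γ m i c = 0) ∧
    (∀ t, (∑ i, M i • v i t) = ∑ i, M i • v i 0) :=
  discrete_momentum_conservation_general x A ρ M hρpos hM Γ m hx v f T hv hibp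
end

section
/- Discrete entropy production: assume the first law dе_i = v_i · dv_i + T_i dη_i + (p_i/ρ_i²) dρ_i holds along trajectories with temperature T_i > 0, and the semi-discrete equations dρ_i/dt = -ρ_i Tr L_i, ρ_i dv_i/dt = f_i, ρ_i de_i/dt = f_i · v_i + L_i : 𝕋_i with 𝕋_i = -p_i I + S_i and S_i = 2(μ_i + μ_i^art)(D_i - (1/3)(Tr D_i) I), D_i = (L_i + L_iᵀ)/2. Then dη_i/dt = (2/(ρ_i T_i))(μ_i + μ_i^art) ‖D_i - (1/3)(Tr D_i)I‖_F² ≥ 0 whenever μ_i + μ_i^art ≥ 0. -/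
/-!
Multiplying the first law by `ρ` and inserting the mass and momentum equations into the energy
equation, the kinetic work `⟪f, v⟫` and the pressure work `-p Tr L` cancel, leaving
`ρ T η' = L : S`. As `S` is symmetric, `L : S = D : S`; as `S` is a multiple of the trace-free
part `Dev` of `D` and `I` is Frobenius-orthogonal to trace-free matrices, `D : S = S : Dev`,
which is `2(μ + μ_art) ‖Dev‖_F²`.
-/

open scoped RealInnerProductSpace

/-- Frobenius inner product of `3×3` matrices. -/
def frob3 (Amat Bmat : Matrix (Fin 3) (Fin 3) ℝ) : ℝ :=
  ∑ k, ∑ l, Amat k l * Bmat k l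

section Frobenius

variable (A B C : Matrix (Fin 3) (Fin 3) ℝ) (c : ℝ)

lemma frob3_comm : frob3 A B = frob3 B A := by
  simp only [frob3, mul_comm]

lemma frob3_add_right : frob3 A (B + C) = frob3 A B + frob3 A C := by
  simp only [frob3, Matrix.add_apply, mul_add, Finset.sum_add_distrib]

lemma frob3_sub_right : frob3 A (B - C) = frob3 A B - frob3 A C := by
  simp only [frob3, Matrix.sub_apply, mul_sub, Finset.sum_sub_distrib]

lemma frob3_smul_right : frob3 A (c • B) = c * frob3 A B := by
  simp only [frob3, Matrix.smul_apply, smul_eq_mul, Finset.mul_sum]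
  exact Finset.sum_congr rfl fun _ _ => Finset.sum_congr rfl fun _ _ => by ring

lemma frob3_one_right : frob3 A 1 = Matrix.trace A := by
  simp [frob3, Matrix.one_apply, Matrix.trace]

lemma frob3_transpose_left : frob3 A.transpose B = frob3 A B.transpose := by
  simp only [frob3, Matrix.transpose_apply]
  exact Finset.sum_comm

lemma frob3_self_nonneg : 0 ≤ frob3 A A :=
  Finset.sum_nonneg fun _ _ => Finset.sum_nonneg fun _ _ => mul_self_nonneg _

lemma frob3_symmPart_left_of_transpose_eq (hB : B.transpose = B) :
    frob3 ((2:ℝ)⁻¹ • (A + A.transpose)) B = frob3 A B := by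
  rw [frob3_comm, frob3_smul_right, frob3_add_right, frob3_comm B A, frob3_comm B,
    frob3_transpose_left, hB]
  ring

end Frobenius

noncomputable def deviator (A : Matrix (Fin 3) (Fin 3) ℝ) : Matrix (Fin 3) (Fin 3) ℝ :=
  A - (Matrix.trace A / 3) • 1

lemma trace_deviator (A : Matrix (Fin 3) (Fin 3) ℝ) : Matrix.trace (deviator A) = 0 := by
  simp [deviator]

lemma transpose_deviator (A : Matrix (Fin 3) (Fin 3) ℝ) :
    (deviator A).transpose = deviator A.transpose := by
  simp [deviator, Matrix.trace_transpose]

lemma frob3_deviator_right (A : Matrix (Fin 3) (Fin 3) ℝ) :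
    frob3 A (deviator A) = frob3 (deviator A) (deviator A) :=
  calc frob3 A (deviator A) = frob3 (deviator A) (A - (Matrix.trace A / 3) • 1) := by
        rw [frob3_sub_right, frob3_smul_right, frob3_one_right, trace_deviator, mul_zero,
          sub_zero, frob3_comm]
    _ = frob3 (deviator A) (deviator A) := rfl

lemma frob3_deviator_symmPart (L : Matrix (Fin 3) (Fin 3) ℝ) :
    frob3 L (deviator ((2:ℝ)⁻¹ • (L + L.transpose)))
      = frob3 (deviator ((2:ℝ)⁻¹ • (L + L.transpose)))
          (deviator ((2:ℝ)⁻¹ • (L + L.transpose))) := by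
  have hsymm : ((2:ℝ)⁻¹ • (L + L.transpose)).transpose = (2:ℝ)⁻¹ • (L + L.transpose) := by
    rw [Matrix.transpose_smul, Matrix.transpose_add, Matrix.transpose_transpose, add_comm]
  rw [← frob3_symmPart_left_of_transpose_eq _ _ (by rw [transpose_deviator, hsymm]),
    frob3_deviator_right]

lemma entropy_balance {E : Type*} [NormedAddCommGroup E] [InnerProductSpace ℝ E]
    {ρ T p trL W e' η' ρ' : ℝ} {v v' f : E} (hρ : ρ ≠ 0)
    (hfirst : e' = ⟪v, v'⟫ + T * η' + (p / ρ ^ 2) * ρ')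
    (hmass : ρ' = -(ρ * trL)) (hmom : ρ • v' = f)
    (hen : ρ * e' = ⟪f, v⟫ + (-p * trL + W)) :
    ρ * T * η' = W := by
  rw [← hmom, real_inner_smul_left, real_inner_comm, hfirst, hmass] at hen
  field_simp at hen
  linear_combination hen

theorem discrete_entropy_production_general
    (ρ Ttemp p μ μart : ℝ → ℝ)
    (v f : ℝ → EuclideanSpace ℝ (Fin 3))
    (L : ℝ → Matrix (Fin 3) (Fin 3) ℝ)
    (ρ' e' η' : ℝ → ℝ) (v' : ℝ → EuclideanSpace ℝ (Fin 3))
    (D S 𝕋 Dev : ℝ → Matrix (Fin 3) (Fin 3) ℝ)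
    (hρpos : ∀ t, 0 < ρ t) (hTpos : ∀ t, 0 < Ttemp t)
    -- definitions of D, its deviatoric part, S and 𝕋
    (hD : ∀ t, D t = (2:ℝ)⁻¹ • (L t + (L t).transpose))
    (hDev : ∀ t, Dev t = D t - ((Matrix.trace (D t)) / 3) • (1 : Matrix (Fin 3) (Fin 3) ℝ))
    (hS : ∀ t, S t = (2 * (μ t + μart t)) • Dev t)
    (h𝕋 : ∀ t, 𝕋 t = -(p t) • (1 : Matrix (Fin 3) (Fin 3) ℝ) + S t)
    -- first law of thermodynamics along the trajectory
    (hfirst : ∀ t, e' t = ⟪v t, v' t⟫ + Ttemp t * η' t + (p t / (ρ t)^2) * ρ' t)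
    -- semi-discrete equations
    (hmass : ∀ t, ρ' t = -(ρ t * Matrix.trace (L t)))
    (hmom : ∀ t, ρ t • v' t = f t)
    (hen : ∀ t, ρ t * e' t = ⟪f t, v t⟫ + frob3 (L t) (𝕋 t))
    (hμ : ∀ t, 0 ≤ μ t + μart t) :
    ∀ t, η' t = (2 / (ρ t * Ttemp t)) * (μ t + μart t) * frob3 (Dev t) (Dev t)
      ∧ 0 ≤ η' t := by
  intro t
  have hDevL : Dev t = deviator ((2:ℝ)⁻¹ • (L t + (L t).transpose)) := by
    rw [hDev t, hD t]; rfl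
  have hstress : frob3 (L t) (𝕋 t)
      = -p t * Matrix.trace (L t) + 2 * (μ t + μart t) * frob3 (Dev t) (Dev t) := by
    rw [h𝕋 t, hS t, frob3_add_right, frob3_smul_right, frob3_one_right, frob3_smul_right,
      hDevL, frob3_deviator_symmPart, mul_assoc]
  have hbalance := entropy_balance (hρpos t).ne' (hfirst t) (hmass t) (hmom t)
    (hstress ▸ hen t)
  have hρT : 0 < ρ t * Ttemp t := mul_pos (hρpos t) (hTpos t)
  have hrate : η' t = (2 / (ρ t * Ttemp t)) * (μ t + μart t) * frob3 (Dev t) (Dev t) := by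
    rw [div_mul_eq_mul_div, div_mul_eq_mul_div, eq_div_iff hρT.ne']
    linear_combination hbalance
  refine ⟨hrate, hrate ▸ ?_⟩
  exact mul_nonneg (mul_nonneg (by positivity) (hμ t)) (frob3_self_nonneg _)

/-- Discrete entropy production: with the first law and the semi-discrete equations,
`dη/dt = (2/(ρT))(μ + μ_art) ‖D - (1/3)(Tr D)I‖_F² ≥ 0` when `μ + μ_art ≥ 0`. -/
theorem discrete_entropy_production
    (ρ e η Ttemp p μ μart : ℝ → ℝ)
    (v f : ℝ → EuclideanSpace ℝ (Fin 3))
    (L : ℝ → Matrix (Fin 3) (Fin 3) ℝ)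
    (ρ' e' η' : ℝ → ℝ) (v' : ℝ → EuclideanSpace ℝ (Fin 3))
    (D S 𝕋 Dev : ℝ → Matrix (Fin 3) (Fin 3) ℝ)
    (hρpos : ∀ t, 0 < ρ t) (hTpos : ∀ t, 0 < Ttemp t)
    (hρ : ∀ t, HasDerivAt ρ (ρ' t) t)
    (he : ∀ t, HasDerivAt e (e' t) t)
    (hη : ∀ t, HasDerivAt η (η' t) t)
    (hv : ∀ t, HasDerivAt v (v' t) t)
    -- definitions of D, its deviatoric part, S and 𝕋
    (hD : ∀ t, D t = (2:ℝ)⁻¹ • (L t + (L t).transpose))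
    (hDev : ∀ t, Dev t = D t - ((Matrix.trace (D t)) / 3) • (1 : Matrix (Fin 3) (Fin 3) ℝ))
    (hS : ∀ t, S t = (2 * (μ t + μart t)) • Dev t)
    (h𝕋 : ∀ t, 𝕋 t = -(p t) • (1 : Matrix (Fin 3) (Fin 3) ℝ) + S t)
    -- first law of thermodynamics along the trajectory
    (hfirst : ∀ t, e' t = ⟪v t, v' t⟫ + Ttemp t * η' t + (p t / (ρ t)^2) * ρ' t)
    -- semi-discrete equations
    (hmass : ∀ t, ρ' t = -(ρ t * Matrix.trace (L t)))
    (hmom : ∀ t, ρ t • v' t = f t)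
    (hen : ∀ t, ρ t * e' t = ⟪f t, v t⟫ + frob3 (L t) (𝕋 t))
    (hμ : ∀ t, 0 ≤ μ t + μart t) :
    ∀ t, η' t = (2 / (ρ t * Ttemp t)) * (μ t + μart t) * frob3 (Dev t) (Dev t)
      ∧ 0 ≤ η' t :=
  discrete_entropy_production_general ρ Ttemp p μ μart v f L ρ' e' η' v' D S 𝕋 Dev hρpos hTpos hD
    hDev hS h𝕋 hfirst hmass hmom hen hμ
end
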